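/- For every integer n ≥ 0, every integer r ≥ 1, all integers k_1,…,k_r, and every real a > r−1, the Hurwitz–Lerch type multi poly-Bernoulli numbers satisfy B_{n,a}^{(k_1,…,k_r)} = ∑_{0≤m_1≤m_2≤⋯≤m_r≤n} (−1)^{n+m_r} · m_r! · S(n, m_r) / ((m_1+a−r+1)^{k_1} (m_2+a−r+2)^{k_2} ⋯ (m_r+a)^{k_r}), where S(n,m) denotes the Stirling number of the second kind. -/

import Mathlib

open Nat Finset

/-- The generalized Hurwitz–Lerch multiple zeta function
`Φ_{(k_1,…,k_r)}(z,a) = ∑_{0≤m_1≤⋯≤m_r} z^{m_r}/∏_{j=1}^r (m_j + a - r + j)^{k_j}`. -/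
noncomputable def hlMultiZeta (r : ℕ) (k : Fin r → ℤ) (z a : ℝ) : ℝ :=
  ∑' m : Fin r → ℕ, if Monotone m then
    z ^ (Finset.univ.sup m) /
      ∏ j, (((m j : ℝ) + a - (r : ℝ) + ((j : ℕ) : ℝ) + 1) ^ (k j)) else 0

/-- Stirling numbers of the second kind. -/
def stirling2 : ℕ → ℕ → ℕ
  | 0, 0 => 1
  | 0, _ + 1 => 0
  | _ + 1, 0 => 0
  | n + 1, k + 1 => (k + 1) * stirling2 n (k + 1) + stirling2 n k

open Filter Topology

/-!
Expanding `(1 - e^{-t})^M = ∑ₙ (-1)^(n+M) M! S(n,M) tⁿ/n!` (binomial theorem plus the explicit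
formula `M! S(n,M) = ∑ᵢ (-1)^(i+M) C(M,i) iⁿ`) inside the series for `Φ(1 - e^{-t}, a)` and
exchanging the two summations produces the generating function of the right-hand side; only the
`m` with `m_r ≤ n` contribute to `tⁿ`, since `S(n, M) = 0` for `M > n`. The exchange is justified
by absolute convergence: taking absolute values termwise gives the series of `Φ(e^|t| - 1, a)`,
and `e^|t| - 1 < 1` once `|t| < log 2`. Finally, a real power series vanishing on a punctured
neighbourhood of `0` is zero (isolated zeros), which identifies the coefficients `B n`.
-/

theorem stirling2_eq_stirlingSecond : stirling2 = Nat.stirlingSecond := by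
  funext n k
  induction n generalizing k with
  | zero => cases k <;> rfl
  | succ n ih =>
    cases k with
    | zero => rfl
    | succ k => rw [stirling2, stirlingSecond_succ_succ, ih, ih]

theorem add_one_mul_choose_add_mul_add_one_choose (M i : ℕ) :
    (M + 1) * M.choose i + i * (M + 1).choose i = (M + 1) * (M + 1).choose i := by
  cases i with
  | zero => simp
  | succ i =>
    rw [mul_comm (i + 1), ← add_one_mul_choose_eq, choose_succ_succ' M i]
    ring

theorem factorial_mul_stirlingSecond_eq_sum (n M : ℕ) :
    (M ! * stirlingSecond n M : ℤ) =
      ∑ i ∈ range (M + 1), (-1) ^ (i + M) * (M.choose i : ℤ) * (i : ℤ) ^ n := by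
  induction n generalizing M with
  | zero =>
    cases M with
    | zero => simp
    | succ M =>
      have h := Int.alternating_sum_range_choose (n := M + 1)
      rw [if_neg (succ_ne_zero M)] at h
      have hswap : ∀ i, (-1 : ℤ) ^ (i + (M + 1)) * ((M + 1).choose i : ℤ) * (i : ℤ) ^ 0 =
          (-1) ^ i * ((M + 1).choose i : ℤ) * (-1) ^ (M + 1) := fun i => by ring
      rw [sum_congr rfl fun i _ => hswap i, ← sum_mul, h]
      simp
  | succ n ih =>
    cases M with
    | zero => simp
    | succ M =>
      have hterm : ∀ i, (-1 : ℤ) ^ (i + (M + 1)) * ((M + 1).choose i : ℤ) * (i : ℤ) ^ (n + 1) =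
          (M + 1) * ((-1) ^ (i + (M + 1)) * ((M + 1).choose i : ℤ) * (i : ℤ) ^ n +
            (-1) ^ (i + M) * (M.choose i : ℤ) * (i : ℤ) ^ n) := fun i => by
        have h := congrArg (Nat.cast : ℕ → ℤ) (add_one_mul_choose_add_mul_add_one_choose M i)
        push_cast at h
        linear_combination (-1 : ℤ) ^ (i + (M + 1)) * (i : ℤ) ^ n * h
      rw [sum_congr rfl fun i _ => hterm i, ← mul_sum, sum_add_distrib, ← ih,
        sum_range_succ _ (M + 1), choose_succ_self, cast_zero, mul_zero, zero_mul, add_zero, ← ih,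
        stirlingSecond_succ_succ, factorial_succ]
      push_cast
      ring

theorem hasSum_exp_sub_one_pow (M : ℕ) (t : ℝ) :
    HasSum (fun n => (M ! * stirlingSecond n M : ℝ) * t ^ n / n !) ((Real.exp t - 1) ^ M) := by
  have hexp (i : ℕ) : HasSum (fun n => ((i : ℝ) * t) ^ n / n !) (Real.exp t ^ i) := by
    rw [← Real.exp_nat_mul, Real.exp_eq_exp_ℝ]
    exact NormedSpace.expSeries_div_hasSum_exp _
  have hbinom : (Real.exp t - 1) ^ M =
      ∑ i ∈ range (M + 1), (-1) ^ (i + M) * (M.choose i : ℝ) * Real.exp t ^ i := by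
    rw [sub_pow]
    exact sum_congr rfl fun i _ => by ring
  rw [hbinom]
  refine (hasSum_sum fun i _ => (hexp i).mul_left ((-1) ^ (i + M) * (M.choose i : ℝ))).congr_fun
    fun n => ?_
  have h := congrArg (Int.cast : ℤ → ℝ) (factorial_mul_stirlingSecond_eq_sum n M)
  push_cast at h
  rw [h, sum_mul, sum_div]
  exact sum_congr rfl fun i _ => by ring

theorem hasSum_one_sub_exp_neg_pow (M : ℕ) (t : ℝ) :
    HasSum (fun n => (-1 : ℝ) ^ (n + M) * M ! * stirlingSecond n M * t ^ n / n !)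
      ((1 - Real.exp (-t)) ^ M) := by
  have h := (hasSum_exp_sub_one_pow M (-t)).mul_left ((-1) ^ M)
  rw [← mul_pow, neg_one_mul, neg_sub] at h
  exact h.congr_fun fun n => by rw [neg_pow, pow_add]; ring

theorem eq_zero_of_hasSum_mul_pow_eq_zero {d : ℕ → ℝ} {ε : ℝ} (hε : 0 < ε)
    (h : ∀ t : ℝ, t ≠ 0 → |t| < ε → HasSum (fun n => d n * t ^ n) 0) : d = 0 := by
  set p := FormalMultilinearSeries.ofScalars ℝ d
  have hε2 : |ε / 2| < ε := by rw [abs_of_pos (half_pos hε)]; exact half_lt_self hε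
  have hsum : Summable fun n => ‖p n‖ * ((ε / 2).toNNReal : ℝ) ^ n := by
    refine ((h _ (half_pos hε).ne' hε2).summable.norm).congr fun n => ?_
    rw [FormalMultilinearSeries.ofScalars_norm, Real.coe_toNNReal _ (half_pos hε).le, norm_mul,
      norm_pow, Real.norm_of_nonneg (half_pos hε).le]
  have hp : HasFPowerSeriesAt p.sum p 0 :=
    (p.hasFPowerSeriesOnBall (lt_of_lt_of_le (by simpa using hε) (p.le_radius_of_summable hsum)))
      |>.hasFPowerSeriesAt
  have hzero : ∀ᶠ t in 𝓝[≠] (0 : ℝ), p.sum t = 0 := by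
    filter_upwards [nhdsWithin_le_nhds (Metric.ball_mem_nhds 0 hε), self_mem_nhdsWithin]
      with t hball ht0
    rw [← FormalMultilinearSeries.ofScalarsSum, FormalMultilinearSeries.ofScalars_sum_eq]
    simpa using (h t ht0 (by simpa using hball)).tsum_eq
  by_contra hd
  have hp0 : p ≠ 0 := fun hp0 => hd <| funext fun n =>
    (FormalMultilinearSeries.ofScalars_eq_zero ℝ n).mp (congrFun hp0 n)
  obtain ⟨t, hne, heq⟩ := ((hp.locally_ne_zero hp0).and hzero).exists
  exact hne heq

theorem hasSum_tsum_swap_of_summable_abs {α β : Type*} {f : α → β → ℝ} {F G : α → ℝ}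
    (hF : ∀ x, HasSum (f x) (F x)) (hG : ∀ x, HasSum (fun y => |f x y|) (G x))
    (hGs : Summable G) :
    HasSum (fun y => ∑' x, f x y) (∑' x, F x) := by
  have habs : Summable fun p : α × β => |f p.1 p.2| :=
    (summable_prod_of_nonneg fun _ => abs_nonneg _).2
      ⟨fun x => (hG x).summable, hGs.congr fun x => (hG x).tsum_eq.symm⟩
  have hf : Summable fun p : α × β => f p.1 p.2 := summable_abs_iff.mp habs
  rw [(hf.hasSum.prod_fiberwise hF).tsum_eq]
  exact ((Equiv.prodComm β α).hasSum_iff.mpr hf.hasSum).prod_fiberwise fun y =>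
    (hf.prod_symm.prod_factor y).hasSum

theorem summable_prod_apply_of_nonneg {ι κ : Type*} [Fintype ι] {f : ι → κ → ℝ}
    (hf0 : ∀ j i, 0 ≤ f j i) (hf : ∀ j, Summable (f j)) :
    Summable fun m : ι → κ => ∏ j, f j (m j) := by
  classical
  refine summable_of_sum_le (c := ∏ j, ∑' i, f j i)
    (fun m => prod_nonneg fun j _ => hf0 j (m j)) fun s => ?_
  calc ∑ m ∈ s, ∏ j, f j (m j)
      ≤ ∑ m ∈ Fintype.piFinset fun j => s.image (· j), ∏ j, f j (m j) :=
        sum_le_sum_of_subset_of_nonneg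
          (fun m hm => Fintype.mem_piFinset.mpr fun j => mem_image_of_mem _ hm)
          fun m _ _ => prod_nonneg fun j _ => hf0 j (m j)
    _ = ∏ j, ∑ i ∈ s.image (· j), f j i := (prod_univ_sum _ _).symm
    _ ≤ ∏ j, ∑' i, f j i :=
        Finset.prod_le_prod (fun j _ => sum_nonneg fun i _ => hf0 j i)
          fun j _ => (hf j).sum_le_tsum _ fun i _ => hf0 j i

theorem summable_pow_mul_add_one_pow {v : ℝ} (hv0 : 0 ≤ v) (hv1 : v < 1) (N : ℕ) :
    Summable fun i : ℕ => v ^ i * ((i : ℝ) + 1) ^ N := by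
  have hpoly := summable_pow_mul_geometric_of_norm_lt_one N (by rwa [Real.norm_of_nonneg hv0])
  refine Summable.of_nonneg_of_le (fun i => by positivity) (fun i => ?_)
    ((hpoly.add (summable_geometric_of_lt_one hv0 hv1)).mul_left (2 ^ (N - 1)))
  calc v ^ i * ((i : ℝ) + 1) ^ N ≤ v ^ i * (2 ^ (N - 1) * ((i : ℝ) ^ N + 1 ^ N)) :=
        mul_le_mul_of_nonneg_left (add_pow_le (by positivity) zero_le_one N) (by positivity)
    _ = 2 ^ (N - 1) * ((i : ℝ) ^ N * v ^ i + v ^ i) := by ring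

theorem summable_pow_sup_mul_prod_pow {ι : Type*} [Fintype ι] {w : ℝ} (hw0 : 0 ≤ w) (hw1 : w < 1)
    (N : ι → ℕ) : Summable fun m : ι → ℕ => w ^ univ.sup m * ∏ j, ((m j : ℝ) + 1) ^ N j := by
  rcases isEmpty_or_nonempty ι with hι | hι
  · exact Summable.of_finite
  set v := w ^ (Fintype.card ι : ℝ)⁻¹
  have hcard : (Fintype.card ι : ℝ) ≠ 0 := by exact_mod_cast Fintype.card_ne_zero
  have hv0 : 0 ≤ v := Real.rpow_nonneg hw0 _
  have hv1 : v < 1 := Real.rpow_lt_one hw0 hw1 (by positivity)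
  have hvw : v ^ Fintype.card ι = w := by
    rw [← Real.rpow_natCast, ← Real.rpow_mul hw0, inv_mul_cancel₀ hcard, Real.rpow_one]
  have hsup (m : ι → ℕ) : w ^ univ.sup m ≤ ∏ j, v ^ m j := by
    rw [prod_pow_eq_pow_sum, ← hvw, ← pow_mul]
    refine pow_le_pow_of_le_one hv0 hv1.le ?_
    simpa using sum_le_card_nsmul univ m _ fun j _ => le_sup (mem_univ j)
  refine Summable.of_nonneg_of_le (fun m => by positivity) (fun m => ?_)
    (summable_prod_apply_of_nonneg (fun j i => by positivity)
      fun j => summable_pow_mul_add_one_pow hv0 hv1 (N j))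
  rw [prod_mul_distrib]
  exact mul_le_mul_of_nonneg_right (hsup m) (by positivity)

theorem exists_zpow_neg_le_mul_add_one_pow {b : ℝ} (hb : 0 < b) (k : ℤ) :
    ∃ C, ∀ i : ℕ, ((i : ℝ) + b) ^ (-k) ≤ C * ((i : ℝ) + 1) ^ k.natAbs := by
  obtain ⟨n, rfl | rfl⟩ := Int.eq_nat_or_neg k
  · refine ⟨(b ^ n)⁻¹, fun i => ?_⟩
    rw [zpow_neg, zpow_natCast, Int.natAbs_natCast]
    calc (((i : ℝ) + b) ^ n)⁻¹ ≤ (b ^ n)⁻¹ :=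
          inv_anti₀ (by positivity) (pow_le_pow_left₀ hb.le (by simp) n)
      _ ≤ (b ^ n)⁻¹ * ((i : ℝ) + 1) ^ n :=
          le_mul_of_one_le_right (by positivity) (one_le_pow₀ (by simp))
  · refine ⟨(1 + b) ^ n, fun i => ?_⟩
    rw [neg_neg, zpow_natCast, Int.natAbs_neg, Int.natAbs_natCast, ← mul_pow]
    exact pow_le_pow_left₀ (by positivity) (by nlinarith [i.cast_nonneg (α := ℝ)]) n

section HurwitzLerch

variable (r : ℕ) (k : Fin r → ℤ) (a : ℝ)

noncomputable def hlDenom (m : Fin r → ℕ) : ℝ :=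
  ∏ j, (((m j : ℝ) + a - (r : ℝ) + ((j : ℕ) : ℝ) + 1) ^ (k j))

noncomputable def hlPolyBernoulliSum (n : ℕ) : ℝ :=
  ∑ m ∈ Fintype.piFinset (fun _ : Fin r => range (n + 1)),
    if Monotone m then
      (-1 : ℝ) ^ (n + univ.sup m) * (univ.sup m)! * stirlingSecond n (univ.sup m) /
        hlDenom r k a m
    else 0

variable {r a}

theorem hlDenom_pos (ha : (r : ℝ) - 1 < a) (m : Fin r → ℕ) : 0 < hlDenom r k a m :=
  prod_pos fun j _ =>
    zpow_pos (by linarith [(m j).cast_nonneg (α := ℝ), (j : ℕ).cast_nonneg (α := ℝ)]) _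

theorem summable_hlMultiZeta (ha : (r : ℝ) - 1 < a) {w : ℝ} (hw0 : 0 ≤ w) (hw1 : w < 1) :
    Summable fun m : Fin r → ℕ => if Monotone m then w ^ univ.sup m / hlDenom r k a m else 0 := by
  have hb (j : Fin r) : 0 < a - r + j + 1 := by
    have : (0 : ℝ) ≤ j := by positivity
    linarith
  choose C hC using fun j => exists_zpow_neg_le_mul_add_one_pow (hb j) (k j)
  have hC0 (j : Fin r) : 0 ≤ C j := by
    have h0 := hC j 0
    rw [cast_zero, zero_add, zero_add, one_pow, mul_one] at h0
    exact (zpow_pos (hb j) _).le.trans h0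
  refine Summable.of_nonneg_of_le (fun m => ?_) (fun m => ?_)
    ((summable_pow_sup_mul_prod_pow hw0 hw1 fun j => (k j).natAbs).mul_left (∏ j, C j))
  · split_ifs
    exacts [div_nonneg (by positivity) (hlDenom_pos k ha m).le, le_rfl]
  · split_ifs
    · calc w ^ univ.sup m / hlDenom r k a m
          = w ^ univ.sup m * ∏ j, ((m j : ℝ) + (a - r + j + 1)) ^ (-k j) := by
            rw [div_eq_mul_inv, hlDenom, ← prod_inv_distrib]
            congr 1
            exact prod_congr rfl fun j _ => by rw [zpow_neg]; ring_nf
        _ ≤ w ^ univ.sup m * ∏ j, (C j * ((m j : ℝ) + 1) ^ (k j).natAbs) :=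
            mul_le_mul_of_nonneg_left (Finset.prod_le_prod
              (fun j _ => (zpow_pos (add_pos_of_nonneg_of_pos (cast_nonneg _) (hb j)) _).le)
              fun j _ => hC j (m j)) (by positivity)
        _ = _ := by rw [prod_mul_distrib]; ring
    · exact mul_nonneg (prod_nonneg fun j _ => hC0 j) (by positivity)

theorem hasSum_hlPolyBernoulliSum (ha : (r : ℝ) - 1 < a) {t : ℝ} (ht : |t| < Real.log 2) :
    HasSum (fun n => hlPolyBernoulliSum r k a n * t ^ n / n !)
      (hlMultiZeta r k (1 - Real.exp (-t)) a) := by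
  set f : (Fin r → ℕ) → ℕ → ℝ := fun m n => if Monotone m then
    (-1 : ℝ) ^ (n + univ.sup m) * (univ.sup m)! * stirlingSecond n (univ.sup m) * t ^ n / n ! /
      hlDenom r k a m else 0
  have hF (m : Fin r → ℕ) : HasSum (f m)
      (if Monotone m then (1 - Real.exp (-t)) ^ univ.sup m / hlDenom r k a m else 0) := by
    by_cases hm : Monotone m
    · simpa [f, hm] using (hasSum_one_sub_exp_neg_pow (univ.sup m) t).div_const _
    · simp [f, hm]
  have hG (m : Fin r → ℕ) : HasSum (fun n => |f m n|)
      (if Monotone m then (Real.exp |t| - 1) ^ univ.sup m / hlDenom r k a m else 0) := by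
    by_cases hm : Monotone m
    · simpa [f, hm, abs_div, abs_mul, abs_of_pos (hlDenom_pos k ha m)]
        using (hasSum_exp_sub_one_pow (univ.sup m) |t|).div_const _
    · simp [f, hm]
  have hw1 : Real.exp |t| - 1 < 1 := by
    linarith [(Real.exp_lt_exp.mpr ht).trans_eq (Real.exp_log two_pos)]
  have hw0 : 0 ≤ Real.exp |t| - 1 := by linarith [Real.add_one_le_exp |t|, abs_nonneg t]
  have hsum := hasSum_tsum_swap_of_summable_abs hF hG (summable_hlMultiZeta k ha hw0 hw1)
  refine hsum.congr_fun fun n => ?_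
  have hvanish (m : Fin r → ℕ) (hm : m ∉ Fintype.piFinset fun _ => range (n + 1)) : f m n = 0 := by
    obtain ⟨j, hj⟩ : ∃ j, n < m j := by simpa [Fintype.mem_piFinset] using hm
    simp [f, stirlingSecond_eq_zero_of_lt (hj.trans_le (le_sup (mem_univ j)))]
  rw [tsum_eq_sum hvanish, hlPolyBernoulliSum, sum_mul, sum_div]
  refine sum_congr rfl fun m _ => ?_
  split_ifs with hm <;> simp only [f, hm, if_true, if_false] <;> ring

end HurwitzLerch

theorem statement15_general
    (r : ℕ) (k : Fin r → ℤ)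
    (a : ℝ) (ha : (r : ℝ) - 1 < a)
    (B : ℕ → ℝ)
    (hB : ∃ ε > 0, ∀ t : ℝ, t ≠ 0 → |t| < ε →
      HasSum (fun n : ℕ => B n * t ^ n / (n ! : ℝ))
        (hlMultiZeta r k (1 - Real.exp (-t)) a))
    (n : ℕ) :
    B n = ∑ m ∈ Fintype.piFinset (fun _ : Fin r => Finset.range (n + 1)),
      if Monotone m then
        (-1 : ℝ) ^ (n + Finset.univ.sup m) * ((Finset.univ.sup m)! : ℝ) *
          (stirling2 n (Finset.univ.sup m) : ℝ) /
          ∏ j, (((m j : ℝ) + a - (r : ℝ) + ((j : ℕ) : ℝ) + 1) ^ (k j))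
      else 0 := by
  obtain ⟨ε, hε, hB⟩ := hB
  have hcoeff : (fun n => (B n - hlPolyBernoulliSum r k a n) / n !) = 0 := by
    refine eq_zero_of_hasSum_mul_pow_eq_zero (lt_min hε (Real.log_pos one_lt_two))
      fun t ht0 ht => ?_
    have h := (hB t ht0 (ht.trans_le (min_le_left _ _))).sub
      (hasSum_hlPolyBernoulliSum k ha (ht.trans_le (min_le_right _ _)))
    rw [sub_self] at h
    exact h.congr_fun fun n => by ring
  have h := congr_fun hcoeff n
  rw [Pi.zero_apply, div_eq_zero_iff, sub_eq_zero] at h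
  rw [stirling2_eq_stirlingSecond]
  exact h.resolve_right (cast_ne_zero.mpr n.factorial_ne_zero)

/-- the Hurwitz–Lerch type multi poly-Bernoulli numbers (with e.g.f.
`Φ(1−e^{−t},a)`) satisfy `B_{n,a}^{(k_1,…,k_r)} = ∑_{0≤m_1≤⋯≤m_r≤n} (−1)^{n+m_r} m_r! S(n,m_r) /
∏_{j=1}^r (m_j+a−r+j)^{k_j}`. -/
theorem statement15
    (r : ℕ) (hr : 1 ≤ r) (k : Fin r → ℤ)
    (a : ℝ) (ha : (r : ℝ) - 1 < a)
    (B : ℕ → ℝ)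
    (hB : ∃ ε > 0, ∀ t : ℝ, t ≠ 0 → |t| < ε →
      HasSum (fun n : ℕ => B n * t ^ n / (n ! : ℝ))
        (hlMultiZeta r k (1 - Real.exp (-t)) a))
    (n : ℕ) :
    B n = ∑ m ∈ Fintype.piFinset (fun _ : Fin r => Finset.range (n + 1)),
      if Monotone m then
        (-1 : ℝ) ^ (n + Finset.univ.sup m) * ((Finset.univ.sup m)! : ℝ) *
          (stirling2 n (Finset.univ.sup m) : ℝ) /
          ∏ j, (((m j : ℝ) + a - (r : ℝ) + ((j : ℕ) : ℝ) + 1) ^ (k j))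
      else 0 :=
  statement15_general r k a ha B hB n
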